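/- arXiv:2502.16811 — 3 statements merged into one kernel-verified Lean document; each statement's English description precedes it below -/
import Mathlib

section
/- Let H be a real inner product space, let a < b be real numbers, ε > 0, σ ≥ 0, let f : ℝ → H be differentiable on [a, b] with f(a) = 0, and let M : ℝ → ℝ be continuous and nonnegative on [a, b]. If ε⟨f'(t), f(t)⟩ + σ‖f(t)‖² ≤ M(t)‖f(t)‖ for all t ∈ [a, b], then ‖f(t)‖ ≤ (1/ε) ∫ₐᵗ M(θ) dθ for all t ∈ [a, b]. -/
/-!
Smooth the norm as `w = √(‖f‖² + δ²)`. Then `w' = ⟪f', f⟫ / w ≤ m ‖f‖ / w ≤ m`, so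
`w(b) - w(a) ≤ ∫ₐᵇ m`, while `‖f‖ ≤ w ≤ ‖f‖ + δ`; let `δ → 0`. For the theorem take
`m = M / ε`, after discarding the nonnegative term `σ ‖f‖²`.
-/

open RealInnerProductSpace Set

lemma Real.le_sqrt_sq_add {x c : ℝ} (hx : 0 ≤ x) (hc : 0 ≤ c) : x ≤ √(x ^ 2 + c) :=
  (Real.le_sqrt hx (by positivity)).2 (le_add_of_nonneg_right hc)

lemma Real.sqrt_sq_add_sq_le_add {x y : ℝ} (hx : 0 ≤ x) (hy : 0 ≤ y) : √(x ^ 2 + y ^ 2) ≤ x + y :=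
  (Real.sqrt_le_left (by positivity)).2 (by nlinarith)

section

variable {H : Type*} [NormedAddCommGroup H] [InnerProductSpace ℝ H]

lemma HasDerivWithinAt.sqrt_norm_sq_add_sq {f : ℝ → H} {f' : H} {s : Set ℝ} {t δ : ℝ}
    (hf : HasDerivWithinAt f f' s t) (hδ : δ ≠ 0) :
    HasDerivWithinAt (fun u ↦ √(‖f u‖ ^ 2 + δ ^ 2)) (⟪f', f t⟫ / √(‖f t‖ ^ 2 + δ ^ 2)) s t := by
  convert (hf.norm_sq.add_const (δ ^ 2)).sqrt (by positivity) using 1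
  rw [real_inner_comm]
  field_simp

theorem norm_le_norm_add_integral_of_inner_deriv_le {f f' : ℝ → H} {m : ℝ → ℝ} {a b : ℝ}
    (hab : a ≤ b) (hf : ContinuousOn f (Icc a b))
    (hf' : ∀ t ∈ Ioo a b, HasDerivWithinAt f (f' t) (Ioi t) t)
    (hm : MeasureTheory.IntegrableOn m (Icc a b)) (hm₀ : ∀ t ∈ Ioo a b, 0 ≤ m t)
    (hinner : ∀ t ∈ Ioo a b, ⟪f' t, f t⟫ ≤ m t * ‖f t‖) :
    ‖f b‖ ≤ ‖f a‖ + ∫ t in a..b, m t := by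
  refine le_of_forall_pos_le_add fun δ hδ ↦ ?_
  set w : ℝ → ℝ := fun u ↦ √(‖f u‖ ^ 2 + δ ^ 2)
  have hw_pos : ∀ u, 0 < w u := fun u ↦ Real.sqrt_pos.2 (by positivity)
  have hw_deriv_le : ∀ t ∈ Ioo a b, ⟪f' t, f t⟫ / w t ≤ m t := fun t ht ↦ by
    rw [div_le_iff₀ (hw_pos t)]
    calc ⟪f' t, f t⟫ ≤ m t * ‖f t‖ := hinner t ht
      _ ≤ m t * w t := by
        gcongr
        exacts [hm₀ t ht, Real.le_sqrt_sq_add (norm_nonneg _) (sq_nonneg δ)]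
  have hw_incr : w b - w a ≤ ∫ t in a..b, m t :=
    intervalIntegral.sub_le_integral_of_hasDeriv_right_of_le hab
      (by fun_prop (disch := exact fun u ↦ (hw_pos u).ne'))
      (fun t ht ↦ (hf' t ht).sqrt_norm_sq_add_sq hδ.ne') hm hw_deriv_le
  linarith [Real.le_sqrt_sq_add (norm_nonneg (f b)) (sq_nonneg δ),
    Real.sqrt_sq_add_sq_le_add (norm_nonneg (f a)) hδ.le]

end

theorem stmt_7_general {H : Type*} [NormedAddCommGroup H] [InnerProductSpace ℝ H]
    (a b : ℝ) (ε σ : ℝ) (hε : 0 < ε) (hσ : 0 ≤ σ)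
    (f : ℝ → H) (f' : ℝ → H)
    (hf : ∀ t ∈ Set.Icc a b, HasDerivWithinAt f (f' t) (Set.Icc a b) t)
    (hfa : f a = 0)
    (M : ℝ → ℝ) (hMcont : ContinuousOn M (Set.Icc a b))
    (hMpos : ∀ t ∈ Set.Icc a b, 0 ≤ M t)
    (hineq : ∀ t ∈ Set.Icc a b,
      ε * ⟪f' t, f t⟫ + σ * ‖f t‖ ^ 2 ≤ M t * ‖f t‖) :
    ∀ t ∈ Set.Icc a b, ‖f t‖ ≤ (1 / ε) * ∫ θ in a..t, M θ := by
  intro t ⟨hat, htb⟩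
  have hsub : Icc a t ⊆ Icc a b := Icc_subset_Icc_right htb
  have hderiv : ∀ s ∈ Ioo a t, HasDerivWithinAt f (f' s) (Ioi s) s := fun s hs ↦
    ((hf s (hsub (Ioo_subset_Icc_self hs))).hasDerivAt
      (Icc_mem_nhds hs.1 (hs.2.trans_le htb))).hasDerivWithinAt
  have hinner : ∀ s ∈ Ioo a t, ⟪f' s, f s⟫ ≤ M s / ε * ‖f s‖ := fun s hs ↦ by
    have hs' := hsub (Ioo_subset_Icc_self hs)
    rw [div_mul_eq_mul_div, le_div_iff₀ hε]
    nlinarith [hineq s hs', mul_nonneg hσ (sq_nonneg ‖f s‖)]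
  have key := norm_le_norm_add_integral_of_inner_deriv_le hat
    (fun s hs ↦ (hf s (hsub hs)).continuousWithinAt.mono hsub) hderiv
    ((hMcont.mono hsub).integrableOn_Icc.div_const ε)
    (fun s hs ↦ div_nonneg (hMpos s (hsub (Ioo_subset_Icc_self hs))) hε.le) hinner
  rwa [hfa, norm_zero, zero_add, intervalIntegral.integral_div, div_eq_inv_mul, ← one_div] at key

/-- Differential-inequality argument from the proof of Lemma 3.4.6: if `f(a) = 0` and
`ε⟨f'(t), f(t)⟩ + σ‖f(t)‖² ≤ M(t)‖f(t)‖` on `[a, b]` with `M` continuous and nonnegative,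
then `‖f(t)‖ ≤ (1/ε) ∫ₐᵗ M(θ) dθ` on `[a, b]`. -/
theorem stmt_7 {H : Type*} [NormedAddCommGroup H] [InnerProductSpace ℝ H]
    (a b : ℝ) (hab : a < b) (ε σ : ℝ) (hε : 0 < ε) (hσ : 0 ≤ σ)
    (f : ℝ → H) (f' : ℝ → H)
    (hf : ∀ t ∈ Set.Icc a b, HasDerivWithinAt f (f' t) (Set.Icc a b) t)
    (hfa : f a = 0)
    (M : ℝ → ℝ) (hMcont : ContinuousOn M (Set.Icc a b))
    (hMpos : ∀ t ∈ Set.Icc a b, 0 ≤ M t)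
    (hineq : ∀ t ∈ Set.Icc a b,
      ε * ⟪f' t, f t⟫ + σ * ‖f t‖ ^ 2 ≤ M t * ‖f t‖) :
    ∀ t ∈ Set.Icc a b, ‖f t‖ ≤ (1 / ε) * ∫ θ in a..t, M θ :=
  stmt_7_general a b ε σ hε hσ f f' hf hfa M hMcont hMpos hineq
end

section
/- Let H be a real Banach space, let a < b be real numbers and set τ = b − a. Let f : ℝ → H be twice differentiable on [a, b] with f'' continuous on [a, b]. Then ‖(f(b) − f(a))/τ − f'(b)‖² ≤ (τ/3) ∫ₐᵇ ‖f''(θ)‖² dθ. -/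
/-!
With `F θ = (θ - a) • f' θ - f θ` one has `F' θ = (θ - a) • f'' θ` and
`F b - F a = τ • f' b - (f b - f a)`, so the error is `τ⁻¹ (F b - F a)`, whose norm is at most
`τ⁻¹ ∫ (θ - a) ‖f''‖`. Cauchy–Schwarz against `∫ₐᵇ (θ - a)² = τ³/3` gives the constant `τ/3`.
-/

open Set MeasureTheory

namespace intervalIntegral

theorem sq_integral_mul_le {u v : ℝ → ℝ} {a b : ℝ} (hab : a ≤ b)
    (hu : ContinuousOn u (uIcc a b)) (hv : ContinuousOn v (uIcc a b)) :
    (∫ x in a..b, u x * v x) ^ 2 ≤ (∫ x in a..b, u x ^ 2) * ∫ x in a..b, v x ^ 2 := by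
  have huu : IntervalIntegrable (fun x => u x ^ 2) volume a b := (hu.pow 2).intervalIntegrable
  have huv : IntervalIntegrable (fun x => u x * v x) volume a b := (hu.mul hv).intervalIntegrable
  have hvv : IntervalIntegrable (fun x => v x ^ 2) volume a b := (hv.pow 2).intervalIntegrable
  -- `t ↦ ∫ (t u - v)²` is a nonnegative quadratic, so its discriminant is nonpositive.
  have hquad : ∀ t : ℝ, 0 ≤ (∫ x in a..b, u x ^ 2) * (t * t)
      + (-2 * ∫ x in a..b, u x * v x) * t + ∫ x in a..b, v x ^ 2 := by
    intro t
    have hexpand : ∫ x in a..b, (t * u x - v x) ^ 2 = (∫ x in a..b, u x ^ 2) * (t * t)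
        + (-2 * ∫ x in a..b, u x * v x) * t + ∫ x in a..b, v x ^ 2 := by
      have hsq : (fun x => (t * u x - v x) ^ 2)
          = fun x => t ^ 2 * u x ^ 2 - 2 * t * (u x * v x) + v x ^ 2 := by
        ext x; ring
      rw [hsq, integral_add ((huu.const_mul _).sub (huv.const_mul _)) hvv,
        integral_sub (huu.const_mul _) (huv.const_mul _), integral_const_mul, integral_const_mul]
      ring
    rw [← hexpand]
    exact integral_nonneg hab fun x _ => sq_nonneg _
  have hdisc := discrim_le_zero hquad
  rw [discrim] at hdisc
  linarith

end intervalIntegral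

theorem integral_sub_left_sq (a b : ℝ) : ∫ θ in a..b, (θ - a) ^ 2 = (b - a) ^ 3 / 3 := by
  rw [intervalIntegral.integral_comp_sub_right (· ^ 2), integral_pow]
  ring

section BackwardDifference

variable {E : Type*} [NormedAddCommGroup E] [NormedSpace ℝ E] {a b : ℝ} {f f' f'' : ℝ → E}

theorem hasDerivWithinAt_smul_deriv_sub
    (hf : ∀ t ∈ Icc a b, HasDerivWithinAt f (f' t) (Icc a b) t)
    (hf' : ∀ t ∈ Icc a b, HasDerivWithinAt f' (f'' t) (Icc a b) t) {t : ℝ} (ht : t ∈ Icc a b) :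
    HasDerivWithinAt (fun θ => (θ - a) • f' θ - f θ) ((t - a) • f'' t) (Icc a b) t := by
  convert (((hasDerivWithinAt_id t _).sub_const a).smul (hf' t ht)).sub (hf t ht) using 1
  · rfl
  · simp

theorem norm_smul_deriv_sub_sub_le_integral
    (hab : a ≤ b) (hf : ∀ t ∈ Icc a b, HasDerivWithinAt f (f' t) (Icc a b) t)
    (hf' : ∀ t ∈ Icc a b, HasDerivWithinAt f' (f'' t) (Icc a b) t)
    (hf'' : ContinuousOn f'' (Icc a b)) :
    ‖(b - a) • f' b - (f b - f a)‖ ≤ ∫ θ in a..b, (θ - a) * ‖f'' θ‖ := by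
  set F : ℝ → E := fun θ => (θ - a) • f' θ - f θ
  have hF : ∀ t ∈ Ioo a b, HasDerivAt F ((t - a) • f'' t) t := fun t ht =>
    (hasDerivWithinAt_smul_deriv_sub hf hf' (Ioo_subset_Icc_self ht)).hasDerivAt
      (Icc_mem_nhds ht.1 ht.2)
  have hFb : F b - F a = (b - a) • f' b - (f b - f a) := by
    simp only [F, sub_self, zero_smul, zero_sub]
    abel
  rw [← hFb]
  refine norm_sub_le_integral_of_norm_deriv_le_of_le hab
    (fun t ht => (hasDerivWithinAt_smul_deriv_sub hf hf' ht).continuousWithinAt)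
    (fun t ht => (hF t ht).differentiableAt.differentiableWithinAt)
    (.of_forall fun t ht => ?_) ?_
  · rw [(hF t ht).deriv, norm_smul, Real.norm_of_nonneg (sub_nonneg.2 ht.1.le)]
  · refine ContinuousOn.intervalIntegrable ?_
    rw [uIcc_of_le hab]
    exact (continuousOn_id.sub continuousOn_const).mul hf''.norm

end BackwardDifference

theorem stmt_8_general {H : Type*} [NormedAddCommGroup H] [NormedSpace ℝ H]
    (a b : ℝ) (hab : a < b) (τ : ℝ) (hτ : τ = b - a)
    (f f' f'' : ℝ → H)
    (hf : ∀ t ∈ Set.Icc a b, HasDerivWithinAt f (f' t) (Set.Icc a b) t)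
    (hf' : ∀ t ∈ Set.Icc a b, HasDerivWithinAt f' (f'' t) (Set.Icc a b) t)
    (hf'' : ContinuousOn f'' (Set.Icc a b)) :
    ‖τ⁻¹ • (f b - f a) - f' b‖ ^ 2 ≤ (τ / 3) * ∫ θ in a..b, ‖f'' θ‖ ^ 2 := by
  subst hτ
  have hτ0 : 0 < b - a := sub_pos.2 hab
  have herror : (b - a)⁻¹ • (f b - f a) - f' b = -(b - a)⁻¹ • ((b - a) • f' b - (f b - f a)) := by
    rw [neg_smul, ← smul_neg, neg_sub, smul_sub _ (f b - f a), smul_smul,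
      inv_mul_cancel₀ hτ0.ne', one_smul]
  have hTaylor := norm_smul_deriv_sub_sub_le_integral hab.le hf hf' hf''
  have hCS := intervalIntegral.sq_integral_mul_le hab.le (u := (· - a)) (v := (‖f'' ·‖))
    (continuousOn_id.sub continuousOn_const) (by rw [uIcc_of_le hab.le]; exact hf''.norm)
  rw [integral_sub_left_sq] at hCS
  calc ‖(b - a)⁻¹ • (f b - f a) - f' b‖ ^ 2
      = (b - a)⁻¹ ^ 2 * ‖(b - a) • f' b - (f b - f a)‖ ^ 2 := by
        rw [herror, norm_smul, norm_neg, Real.norm_of_nonneg (inv_nonneg.2 hτ0.le), mul_pow]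
    _ ≤ (b - a)⁻¹ ^ 2 * ((b - a) ^ 3 / 3 * ∫ θ in a..b, ‖f'' θ‖ ^ 2) := by
        gcongr
        exact (pow_le_pow_left₀ (norm_nonneg _) hTaylor 2).trans hCS
    _ = (b - a) / 3 * ∫ θ in a..b, ‖f'' θ‖ ^ 2 := by
        field_simp

/-- Consistency error of the backward difference quotient (proof of Theorem 3.5.3):
if `f` is twice differentiable on `[a, b]` with continuous second derivative and
`τ = b − a`, then `‖(f(b) − f(a))/τ − f'(b)‖² ≤ (τ/3) ∫ₐᵇ ‖f''(θ)‖² dθ`. -/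
theorem stmt_8 {H : Type*} [NormedAddCommGroup H] [NormedSpace ℝ H] [CompleteSpace H]
    (a b : ℝ) (hab : a < b) (τ : ℝ) (hτ : τ = b - a)
    (f f' f'' : ℝ → H)
    (hf : ∀ t ∈ Set.Icc a b, HasDerivWithinAt f (f' t) (Set.Icc a b) t)
    (hf' : ∀ t ∈ Set.Icc a b, HasDerivWithinAt f' (f'' t) (Set.Icc a b) t)
    (hf'' : ContinuousOn f'' (Set.Icc a b)) :
    ‖τ⁻¹ • (f b - f a) - f' b‖ ^ 2 ≤ (τ / 3) * ∫ θ in a..b, ‖f'' θ‖ ^ 2 :=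
  stmt_8_general a b hab τ hτ f f' f'' hf hf' hf''
end

section
/- Let V and Q be real inner product spaces and let V_h be a linear subspace of V. Let a : V × V → ℝ be a bilinear form and 0 < β₁ ≤ β₂ constants such that β₁‖v‖² ≤ a(v, v) for all v ∈ V and |a(w, v)| ≤ β₂‖w‖‖v‖ for all w, v ∈ V. Let b : V × Q → ℝ be a bilinear form with a constant γ ≥ 0 such that |b(v, q)| ≤ γ‖v‖‖q‖ for all v ∈ V, q ∈ Q. Suppose u ∈ V, p, r ∈ Q and u_h ∈ V_h satisfy a(u_h, v_h) − b(v_h, r) = a(u, v_h) − b(v_h, p) for all v_h ∈ V_h. Then for every w_h ∈ V_h, ‖u_h − w_h‖ ≤ (β₂/β₁)‖u − w_h‖ + (γ/β₁)‖r − p‖, and consequently ‖u_h − u‖ ≤ (1 + β₂/β₁)‖u − w_h‖ + (γ/β₁)‖r − p‖. -/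
/-!
Testing the Ritz identity with `e = u_h − w_h ∈ V_h` gives `a(u_h − u, e) = b(e, r − p)`, hence
`a(e, e) = a(u − w_h, e) + b(e, r − p) ≤ (β₂‖u − w_h‖ + γ‖r − p‖)‖e‖`. Coercivity bounds the left side
below by `β₁‖e‖²`; dividing by `‖e‖` gives the first estimate, and the triangle inequality through
`w_h` the second.
-/

theorem le_div_of_mul_sq_le_mul {β C x : ℝ} (hβ : 0 < β) (hC : 0 ≤ C) (hx : 0 ≤ x)
    (h : β * x ^ 2 ≤ C * x) : x ≤ C / β := by
  rw [le_div_iff₀ hβ]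
  rcases hx.eq_or_lt with rfl | hx
  · simpa using hC
  · nlinarith

theorem LinearMap.apply_sub_eq_of_ritz {R V Q : Type*} [CommRing R] [AddCommGroup V] [Module R V]
    [AddCommGroup Q] [Module R Q] (a : V →ₗ[R] V →ₗ[R] R) (b : V →ₗ[R] Q →ₗ[R] R)
    {u uh v : V} {p r : Q} (h : a uh v - b v r = a u v - b v p) :
    a (uh - u) v = b v (r - p) := by
  simp only [map_sub, LinearMap.sub_apply]
  linear_combination h

theorem norm_sub_le_of_ritz {V Q : Type*} [SeminormedAddCommGroup V] [Module ℝ V]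
    [SeminormedAddCommGroup Q] [Module ℝ Q] {Vh : Submodule ℝ V}
    {a : V →ₗ[ℝ] V →ₗ[ℝ] ℝ} {β₁ β₂ : ℝ} (hβ₁ : 0 < β₁) (hβ₂ : 0 ≤ β₂)
    (hcoer : ∀ v : V, β₁ * ‖v‖ ^ 2 ≤ a v v)
    (hbound : ∀ w v : V, |a w v| ≤ β₂ * ‖w‖ * ‖v‖)
    {b : V →ₗ[ℝ] Q →ₗ[ℝ] ℝ} {γ : ℝ} (hγ : 0 ≤ γ)
    (hbbound : ∀ (v : V) (q : Q), |b v q| ≤ γ * ‖v‖ * ‖q‖)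
    {u uh wh : V} {p r : Q} (huh : uh ∈ Vh) (hwh : wh ∈ Vh)
    (hritz : ∀ vh ∈ Vh, a uh vh - b vh r = a u vh - b vh p) :
    ‖uh - wh‖ ≤ (β₂ * ‖u - wh‖ + γ * ‖r - p‖) / β₁ := by
  set e := uh - wh
  have hsplit : a e e = b e (r - p) + a (u - wh) e := by
    rw [← a.apply_sub_eq_of_ritz b (hritz e (Vh.sub_mem huh hwh)), ← LinearMap.add_apply, ← map_add,
      sub_add_sub_cancel]
  refine le_div_of_mul_sq_le_mul hβ₁ (by positivity) (norm_nonneg e) ?_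
  calc β₁ * ‖e‖ ^ 2 ≤ a e e := hcoer e
    _ = b e (r - p) + a (u - wh) e := hsplit
    _ ≤ |b e (r - p)| + |a (u - wh) e| := add_le_add (le_abs_self _) (le_abs_self _)
    _ ≤ γ * ‖e‖ * ‖r - p‖ + β₂ * ‖u - wh‖ * ‖e‖ := add_le_add (hbbound _ _) (hbound _ _)
    _ = (β₂ * ‖u - wh‖ + γ * ‖r - p‖) * ‖e‖ := by ring

/-- Céa-type estimate from the proof of Lemma 3.5.2: if `a` is coercive (`β₁`) and
bounded (`β₂`) on `V`, `b` is bounded (`γ`), and the Ritz projection identity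
`a(u_h, v_h) − b(v_h, r) = a(u, v_h) − b(v_h, p)` holds for all `v_h` in the subspace
`V_h`, then for every `w_h ∈ V_h`,
`‖u_h − w_h‖ ≤ (β₂/β₁)‖u − w_h‖ + (γ/β₁)‖r − p‖` and
`‖u_h − u‖ ≤ (1 + β₂/β₁)‖u − w_h‖ + (γ/β₁)‖r − p‖`. -/
theorem stmt_10 {V Q : Type*}
    [NormedAddCommGroup V] [InnerProductSpace ℝ V]
    [NormedAddCommGroup Q] [InnerProductSpace ℝ Q]
    (Vh : Submodule ℝ V)
    (a : V →ₗ[ℝ] V →ₗ[ℝ] ℝ) (β₁ β₂ : ℝ) (hβ₁ : 0 < β₁) (hβ₁₂ : β₁ ≤ β₂)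
    (hcoer : ∀ v : V, β₁ * ‖v‖ ^ 2 ≤ a v v)
    (hbound : ∀ w v : V, |a w v| ≤ β₂ * ‖w‖ * ‖v‖)
    (b : V →ₗ[ℝ] Q →ₗ[ℝ] ℝ) (γ : ℝ) (hγ : 0 ≤ γ)
    (hbbound : ∀ (v : V) (q : Q), |b v q| ≤ γ * ‖v‖ * ‖q‖)
    (u : V) (p r : Q) (uh : V) (huh : uh ∈ Vh)
    (hritz : ∀ vh ∈ Vh, a uh vh - b vh r = a u vh - b vh p) :
    ∀ wh ∈ Vh,
      ‖uh - wh‖ ≤ (β₂ / β₁) * ‖u - wh‖ + (γ / β₁) * ‖r - p‖ ∧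
      ‖uh - u‖ ≤ (1 + β₂ / β₁) * ‖u - wh‖ + (γ / β₁) * ‖r - p‖ := by
  intro wh hwh
  have hcea : ‖uh - wh‖ ≤ (β₂ / β₁) * ‖u - wh‖ + (γ / β₁) * ‖r - p‖ := by
    rw [div_mul_eq_mul_div, div_mul_eq_mul_div, ← add_div]
    exact norm_sub_le_of_ritz hβ₁ (hβ₁.le.trans hβ₁₂) hcoer hbound hγ hbbound huh hwh hritz
  have htri : ‖uh - u‖ ≤ ‖uh - wh‖ + ‖u - wh‖ := by
    simpa only [norm_sub_rev wh u] using norm_sub_le_norm_sub_add_norm_sub uh wh u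
  exact ⟨hcea, by linarith⟩
end
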